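/- arXiv:0807.3501 — 7 statements merged into one kernel-verified Lean document; each statement's English description precedes it below -/
import Mathlib

section
/- The function ψ(x) = (√2·x² + 1)·exp(−x⁴/4) satisfies the Schrödinger equation −ψ'' + (x⁶ − 7x²)ψ = λψ with eigenvalue λ = −2√2. -/
open Real

/-!
Writing `ψ = g · exp h` with `g y = √2 y² + 1` and `h y = -y⁴/4`, one gets
`ψ'' = (g'' + 2 g' h' + g (h'' + h'²)) exp h`. Since `h'² = y⁶`, the `y⁶ ψ` term cancels, and
the equation reduces to the polynomial identity `-g'' + 2 y³ g' - 4 y² g = -2√2 g`,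
which holds because `√2 · √2 = 2`.
-/

theorem hasDerivAt_mul_exp {g h : ℝ → ℝ} {g' h' x : ℝ} (hg : HasDerivAt g g' x)
    (hh : HasDerivAt h h' x) :
    HasDerivAt (fun y => g y * exp (h y)) ((g' + g x * h') * exp (h x)) x :=
  (hg.mul hh.exp).congr_deriv (by ring)

theorem deriv_deriv_mul_exp {g g' g'' h h' h'' : ℝ → ℝ}
    (hg : ∀ x, HasDerivAt g (g' x) x) (hg' : ∀ x, HasDerivAt g' (g'' x) x)
    (hh : ∀ x, HasDerivAt h (h' x) x) (hh' : ∀ x, HasDerivAt h' (h'' x) x) (x : ℝ) :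
    deriv (deriv fun y => g y * exp (h y)) x
      = (g'' x + 2 * g' x * h' x + g x * (h'' x + h' x ^ 2)) * exp (h x) := by
  have hd : deriv (fun y => g y * exp (h y)) = fun y => (g' y + g y * h' y) * exp (h y) :=
    funext fun y => (hasDerivAt_mul_exp (hg y) (hh y)).deriv
  have hd' : HasDerivAt (fun y => g' y + g y * h' y) (g'' x + (g' x * h' x + g x * h'' x)) x :=
    (hg' x).add ((hg x).mul (hh' x))
  rw [hd, (hasDerivAt_mul_exp hd' (hh x)).deriv]
  ring

/-- The function ψ(x) = (√2·x² + 1)·exp(−x⁴/4) satisfies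
−ψ'' + (x⁶ − 7x²)ψ = λψ with eigenvalue λ = −2√2. -/
theorem stmt0 :
    ∀ x : ℝ,
      -(deriv (deriv (fun y : ℝ => (Real.sqrt 2 * y ^ 2 + 1) * Real.exp (-y ^ 4 / 4))) x)
        + (x ^ 6 - 7 * x ^ 2) * ((Real.sqrt 2 * x ^ 2 + 1) * Real.exp (-x ^ 4 / 4))
      = (-2 * Real.sqrt 2) * ((Real.sqrt 2 * x ^ 2 + 1) * Real.exp (-x ^ 4 / 4)) := by
  intro x
  have hg : ∀ y : ℝ, HasDerivAt (fun y => √2 * y ^ 2 + 1) (2 * √2 * y) y := fun y =>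
    (((hasDerivAt_pow 2 y).const_mul √2).add_const 1).congr_deriv (by ring)
  have hg' : ∀ y : ℝ, HasDerivAt (fun y => 2 * √2 * y) (2 * √2) y := fun y => by
    simpa using (hasDerivAt_id y).const_mul (2 * √2)
  have hh : ∀ y : ℝ, HasDerivAt (fun y => -y ^ 4 / 4) (-y ^ 3) y := fun y =>
    ((hasDerivAt_pow 4 y).neg.div_const 4).congr_deriv (by ring)
  have hh' : ∀ y : ℝ, HasDerivAt (fun y => -y ^ 3) (-3 * y ^ 2) y := fun y =>
    (hasDerivAt_pow 3 y).neg.congr_deriv (by ring)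
  rw [deriv_deriv_mul_exp hg hg' hh hh' x]
  linear_combination 2 * x ^ 2 * exp (-x ^ 4 / 4) * mul_self_sqrt (zero_le_two : (0 : ℝ) ≤ 2)
end

section
/- The function ψ(x) = (√2·x² − 1)·exp(−x⁴/4) satisfies the Schrödinger equation −ψ'' + (x⁶ − 7x²)ψ = λψ with eigenvalue λ = 2√2. -/
/-! Write ψ = φ·g with the ground state g(x) = exp(−x⁴/4), which satisfies g'' = (x⁶ − 3x²)·g.
Conjugating by g turns −d²/dx² + x⁶ − 3x² into the operator φ ↦ −φ'' + 2x³φ', so the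
eigenvalue equation for ψ becomes the polynomial identity
−φ'' + 2x³φ' − 4x²φ = 2√2·φ for φ(x) = √2·x² − 1. -/

open Real

lemma hasDerivAt_exp_neg_pow_four_div_four (x : ℝ) :
    HasDerivAt (fun y : ℝ => exp (-y ^ 4 / 4)) (-x ^ 3 * exp (-x ^ 4 / 4)) x := by
  have h : HasDerivAt (fun y : ℝ => -y ^ 4 / 4) (-x ^ 3) x :=
    ((hasDerivAt_pow 4 x).neg.div_const 4).congr_deriv (by ring)
  exact h.exp.congr_deriv (by ring)

lemma hasDerivAt_mul_exp_neg_pow_four_div_four {φ : ℝ → ℝ} {d x : ℝ} (hφ : HasDerivAt φ d x) :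
    HasDerivAt (fun y => φ y * exp (-y ^ 4 / 4)) ((d - x ^ 3 * φ x) * exp (-x ^ 4 / 4)) x :=
  (hφ.mul (hasDerivAt_exp_neg_pow_four_div_four x)).congr_deriv (by ring)

lemma neg_deriv_deriv_mul_exp_neg_pow_four_div_four {φ φ' : ℝ → ℝ} {φ'' x : ℝ}
    (hφ : ∀ y, HasDerivAt φ (φ' y) y) (hφ' : HasDerivAt φ' φ'' x) :
    -deriv (deriv fun y => φ y * exp (-y ^ 4 / 4)) x
        + (x ^ 6 - 3 * x ^ 2) * (φ x * exp (-x ^ 4 / 4))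
      = (-φ'' + 2 * x ^ 3 * φ' x) * exp (-x ^ 4 / 4) := by
  have hderiv : deriv (fun y => φ y * exp (-y ^ 4 / 4))
      = fun y => (φ' y - y ^ 3 * φ y) * exp (-y ^ 4 / 4) :=
    funext fun y => (hasDerivAt_mul_exp_neg_pow_four_div_four (hφ y)).deriv
  have hcoeff : HasDerivAt (fun y => φ' y - y ^ 3 * φ y)
      (φ'' - (3 * x ^ 2 * φ x + x ^ 3 * φ' x)) x := by
    have h := hφ'.sub ((hasDerivAt_pow 3 x).mul (hφ x))
    exact h.congr_deriv (by push_cast; ring)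
  rw [hderiv, (hasDerivAt_mul_exp_neg_pow_four_div_four hcoeff).deriv]
  ring

/-- The function ψ(x) = (√2·x² − 1)·exp(−x⁴/4) satisfies
−ψ'' + (x⁶ − 7x²)ψ = λψ with eigenvalue λ = 2√2. -/
theorem stmt1 :
    ∀ x : ℝ,
      -(deriv (deriv (fun y : ℝ => (Real.sqrt 2 * y ^ 2 - 1) * Real.exp (-y ^ 4 / 4))) x)
        + (x ^ 6 - 7 * x ^ 2) * ((Real.sqrt 2 * x ^ 2 - 1) * Real.exp (-x ^ 4 / 4))
      = (2 * Real.sqrt 2) * ((Real.sqrt 2 * x ^ 2 - 1) * Real.exp (-x ^ 4 / 4)) := by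
  intro x
  have hφ (y : ℝ) : HasDerivAt (fun y => √2 * y ^ 2 - 1) (2 * √2 * y) y :=
    (((hasDerivAt_pow 2 y).const_mul √2).sub_const 1).congr_deriv (by ring)
  have hφ' : HasDerivAt (fun y => 2 * √2 * y) (2 * √2) x := by
    simpa using (hasDerivAt_id x).const_mul (2 * √2)
  have hconj := neg_deriv_deriv_mul_exp_neg_pow_four_div_four hφ hφ'
  have hsqrt : √2 * √2 = 2 := mul_self_sqrt zero_le_two
  linear_combination hconj - (2 * x ^ 2 * exp (-x ^ 4 / 4)) * hsqrt
end

section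
/- Let a ∈ ℂ with a ≠ 0. The Stieltjes relations 1/(a−b) − 1/(2a) − a³ = 0 and 1/(−a−b) + 1/(2a) + a³ = 0 (with b ≠ ±a) imply b = 0 and a⁴ = 1/2. -/
/-- The Stieltjes relations 1/(a−b) − 1/(2a) − a³ = 0 and 1/(−a−b) + 1/(2a) + a³ = 0
imply b = 0 and a⁴ = 1/2. -/
theorem stmt6 (a b : ℂ) (ha : a ≠ 0) (hab : b ≠ a) (hab' : b ≠ -a)
    (h1 : 1 / (a - b) - 1 / (2 * a) - a ^ 3 = 0)
    (h2 : 1 / (-a - b) + 1 / (2 * a) + a ^ 3 = 0) :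
    b = 0 ∧ a ^ 4 = 1 / 2 := by
  have hd1 : a - b ≠ 0 := fun h => hab (by linear_combination -h)
  have hd2 : -a - b ≠ 0 := fun h => hab' (by linear_combination -h)
  field_simp at h1 h2
  have h4 : a * (2*a^4 - 1) = 0 := by linear_combination (-1/2) * h1 + (-1/2) * h2
  have ha4 : a ^ 4 = 1 / 2 := by
    rcases mul_eq_zero.1 h4 with h | h
    · exact absurd h ha
    · linear_combination h/2
  refine ⟨?_, ha4⟩
  have : b * 2 = 0 := by linear_combination (1/2)*h1 - (1/2)*h2 - 2*b*ha4
  linear_combination this/2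
end

section
/- Let x₁, y₁ ∈ ℂ be nonzero with x₁ ≠ y₁. If 1/(x₁−y₁) − x₁³ = 0 and −1/(y₁−x₁) − y₁³ = 0, then y₁ = ω·x₁ where ω² + ω + 1 = 0, and x₁⁴ = 1/(1−ω). -/
/-! Both relations say `x₁ ^ 3 * (x₁ - y₁) = 1 = y₁ ^ 3 * (x₁ - y₁)`, so `x₁ ^ 3 = y₁ ^ 3` and
`ω := y₁ / x₁` is a cube root of unity other than `1`. Then
`x₁ ^ 4 * (1 - ω) = x₁ ^ 3 * (x₁ - y₁) = 1`. -/

theorem sq_add_self_add_one_eq_zero_of_pow_three_eq_one {R : Type*} [CommRing R]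
    [NoZeroDivisors R] {ω : R} (h3 : ω ^ 3 = 1) (h1 : ω ≠ 1) : ω ^ 2 + ω + 1 = 0 := by
  have hfactor : (ω - 1) * (ω ^ 2 + ω + 1) = 0 := by linear_combination h3
  exact (mul_eq_zero.mp hfactor).resolve_left (sub_ne_zero.mpr h1)

theorem mul_eq_one_of_one_div_sub_eq_zero {K : Type*} [DivisionRing K] {c d : K} (hd : d ≠ 0)
    (h : 1 / d - c = 0) : c * d = 1 := by
  rw [← sub_eq_zero.mp h, one_div_mul_cancel hd]

theorem stmt7_general (x₁ y₁ : ℂ) (hx : x₁ ≠ 0) (hxy : x₁ ≠ y₁)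
    (h1 : 1 / (x₁ - y₁) - x₁ ^ 3 = 0)
    (h2 : -(1 / (y₁ - x₁)) - y₁ ^ 3 = 0) :
    ∃ ω : ℂ, ω ^ 2 + ω + 1 = 0 ∧ y₁ = ω * x₁ ∧ x₁ ^ 4 = 1 / (1 - ω) := by
  have hd : x₁ - y₁ ≠ 0 := sub_ne_zero.mpr hxy
  have hx3 : x₁ ^ 3 * (x₁ - y₁) = 1 := mul_eq_one_of_one_div_sub_eq_zero hd h1
  have hy3 : y₁ ^ 3 * (x₁ - y₁) = 1 := by
    rw [← one_div_neg_eq_neg_one_div, neg_sub] at h2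
    exact mul_eq_one_of_one_div_sub_eq_zero hd h2
  set ω := y₁ / x₁
  have hyx : y₁ = ω * x₁ := (div_mul_cancel₀ y₁ hx).symm
  have hω1 : ω ≠ 1 := fun h => hxy (by rw [hyx, h, one_mul])
  have hω3 : ω ^ 3 = 1 := by
    rw [div_pow, mul_right_cancel₀ hd (hy3.trans hx3.symm), div_self (pow_ne_zero 3 hx)]
  refine ⟨ω, sq_add_self_add_one_eq_zero_of_pow_three_eq_one hω3 hω1, hyx, ?_⟩
  exact eq_one_div_of_mul_eq_one_left (by linear_combination hx3 + x₁ ^ 3 * hyx)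

/-- If 1/(x₁−y₁) − x₁³ = 0 and −1/(y₁−x₁) − y₁³ = 0 with x₁, y₁ nonzero and distinct,
then y₁ = ω·x₁ with ω² + ω + 1 = 0 and x₁⁴ = 1/(1−ω). -/
theorem stmt7 (x₁ y₁ : ℂ) (hx : x₁ ≠ 0) (hy : y₁ ≠ 0) (hxy : x₁ ≠ y₁)
    (h1 : 1 / (x₁ - y₁) - x₁ ^ 3 = 0)
    (h2 : -(1 / (y₁ - x₁)) - y₁ ^ 3 = 0) :
    ∃ ω : ℂ, ω ^ 2 + ω + 1 = 0 ∧ y₁ = ω * x₁ ∧ x₁ ^ 4 = 1 / (1 - ω) :=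
  stmt7_general x₁ y₁ hx hxy h1 h2
end

section
/- Let X(t) satisfy X(t)² = −i·tan(√2·t)/√2 and let x₁(t) = X(t), x₂(t) = −X(t). Then on any interval where X is defined, smooth, and nonvanishing, these satisfy the Calogero–Moser equations ẍᵢ = 2/(xᵢ − x_j)³ − 3xᵢ⁵ + xᵢ (j ≠ i). -/
/-- If X(t)² = −i·tan(√2 t)/√2 then x₁ = X, x₂ = −X satisfy the two-particle
Calogero–Moser equations ẍᵢ = 2/(xᵢ−x_j)³ − 3xᵢ⁵ + xᵢ. -/
theorem stmt10 (X : ℝ → ℂ) (s : Set ℝ) (hs : IsOpen s)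
    (hX2 : ∀ t ∈ s, X t ^ 2 =
      -Complex.I * Complex.tan ((Real.sqrt 2 * t : ℝ) : ℂ) / (Real.sqrt 2 : ℂ))
    (hsm : ContDiffOn ℝ (⊤ : ℕ∞) X s)
    (hnz : ∀ t ∈ s, X t ≠ 0) :
    ∀ t ∈ s,
      deriv (deriv X) t = 2 / (X t - (-X t)) ^ 3 - 3 * X t ^ 5 + X t ∧
      deriv (deriv (fun u => -X u)) t = 2 / ((-X t) - X t) ^ 3 - 3 * (-X t) ^ 5 + (-X t) := by
  have hs2 : (Real.sqrt 2 : ℂ) ≠ 0 := by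
    simp [Real.sqrt_eq_zero']
  have h22 : ((Real.sqrt 2 : ℂ)) ^ 2 = 2 := by
    rw [sq]; norm_cast; exact Real.mul_self_sqrt (by norm_num)
  have hd : ∀ u ∈ s, HasDerivAt X (deriv X u) u := by
    intro u hu
    exact ((hsm.contDiffAt (hs.mem_nhds hu)).differentiableAt (by simp)).hasDerivAt
  have hcos : ∀ u ∈ s, Complex.cos ((Real.sqrt 2 * u : ℝ) : ℂ) ≠ 0 := by
    intro u hu hc
    apply hnz u hu
    have h := hX2 u hu
    rw [Complex.tan_eq_sin_div_cos, hc, div_zero, mul_zero, zero_div] at h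
    exact pow_eq_zero_iff (by norm_num) |>.mp h
  have hD : ∀ u ∈ s, 2 * X u * deriv X u = -Complex.I * (1 - 2 * X u ^ 4) := by
    intro u hu
    set z : ℂ := ((Real.sqrt 2 * u : ℝ) : ℂ) with hz
    have h1 : HasDerivAt (fun v : ℝ => ((Real.sqrt 2 * v : ℝ) : ℂ)) (Real.sqrt 2 : ℂ) u := by
      have h0 : HasDerivAt (fun v : ℝ => (v : ℂ)) 1 u := by
        exact Complex.ofRealCLM.hasDerivAt (x := u)
      have := h0.const_mul (Real.sqrt 2 : ℂ)
      simp only [mul_one] at this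
      convert this using 2 with v
      · rfl
      push_cast; ring
    have htan : HasDerivAt (fun v : ℝ => Complex.tan ((Real.sqrt 2 * v : ℝ) : ℂ))
        (1 / Complex.cos z ^ 2 * Real.sqrt 2) u :=
      by have := (Complex.hasDerivAt_tan (hcos u hu)).comp u h1; exact this
    have hrhs : HasDerivAt
        (fun v : ℝ => -Complex.I * Complex.tan ((Real.sqrt 2 * v : ℝ) : ℂ) / (Real.sqrt 2 : ℂ))
        (-Complex.I * (1 / Complex.cos z ^ 2 * Real.sqrt 2) / (Real.sqrt 2 : ℂ)) u :=
      (htan.const_mul (-Complex.I)).div_const _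
    have hsq : HasDerivAt (fun v => X v ^ 2)
        (-Complex.I * (1 / Complex.cos z ^ 2 * Real.sqrt 2) / (Real.sqrt 2 : ℂ)) u := by
      apply hrhs.congr_of_eventuallyEq
      filter_upwards [hs.mem_nhds hu] with v hv
      exact hX2 v hv
    have hsq2 : HasDerivAt (fun v => X v ^ 2) (2 * X u * deriv X u) u := by
      have := (hasDerivAt_pow 2 (X u)).comp u (hd u hu)
      exact (by simpa [mul_comm, mul_assoc] using this : HasDerivAt ((fun x => x ^ 2) ∘ X) (2 * X u * deriv X u) u)
    have huniq := hsq2.unique hsq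
    have hsec : (1 : ℂ) / Complex.cos z ^ 2 = 1 + Complex.tan z ^ 2 := by
      rw [← Complex.inv_one_add_tan_sq (hcos u hu), one_div, inv_inv]
    have htz : Complex.tan z = Complex.I * (Real.sqrt 2 : ℂ) * X u ^ 2 := by
      have h := hX2 u hu
      rw [← hz] at h
      field_simp at h
      linear_combination (-Complex.I) * h + Complex.tan z * Complex.I_sq
    have htz2 : (Complex.I * (Real.sqrt 2 : ℂ) * X u ^ 2) ^ 2 = -2 * X u ^ 4 := by
      rw [mul_pow, mul_pow, Complex.I_sq, h22]; ring
    rw [huniq, hsec, htz, htz2]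
    field_simp
    ring
  intro t ht
  have hXt := hnz t ht
  have hDt := hD t ht
  have hiD : Complex.I * deriv X t * (2 * X t) = 1 - 2 * X t ^ 4 := by
    linear_combination Complex.I * hDt - (1 - 2 * X t ^ 4) * Complex.I_sq
  have hnum : HasDerivAt (fun u => Complex.I * (2 * X u ^ 4 - 1))
      (Complex.I * (8 * X t ^ 3 * deriv X t)) t := by
    have h4 : HasDerivAt (fun u => X u ^ 4) (4 * X t ^ 3 * deriv X t) t := by
      have := (hasDerivAt_pow 4 (X t)).comp t (hd t ht)
      exact (by simpa [mul_comm, mul_assoc] using this : HasDerivAt ((fun x => x ^ 4) ∘ X) (4 * X t ^ 3 * deriv X t) t)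
    have := ((h4.const_mul (2:ℂ)).sub_const 1).const_mul Complex.I
    convert this using 1
    · rfl
    ring
  have hden : HasDerivAt (fun u => 2 * X u) (2 * deriv X t) t := (hd t ht).const_mul 2
  have hg : HasDerivAt (fun u => Complex.I * (2 * X u ^ 4 - 1) / (2 * X u))
      ((Complex.I * (8 * X t ^ 3 * deriv X t) * (2 * X t) -
        Complex.I * (2 * X t ^ 4 - 1) * (2 * deriv X t)) / (2 * X t) ^ 2) t :=
    hnum.div hden (by simpa using hXt)
  have hEg : deriv X =ᶠ[nhds t] fun u => Complex.I * (2 * X u ^ 4 - 1) / (2 * X u) := by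
    filter_upwards [hs.mem_nhds ht] with u hu
    have h := hD u hu
    have hXu := hnz u hu
    field_simp
    linear_combination h
  have hdd : deriv (deriv X) t =
      (Complex.I * (8 * X t ^ 3 * deriv X t) * (2 * X t) -
        Complex.I * (2 * X t ^ 4 - 1) * (2 * deriv X t)) / (2 * X t) ^ 2 := by
    rw [hEg.deriv_eq]
    exact hg.deriv
  have key : deriv (deriv X) t = 2 / (X t - (-X t)) ^ 3 - 3 * X t ^ 5 + X t := by
    rw [hdd]
    field_simp [hXt]
    linear_combination (4 * (6 * X t ^ 4 + 1)) * hiD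
  refine ⟨key, ?_⟩
  have hneg : deriv (deriv (fun u => -X u)) t = -deriv (deriv X) t := by
    have : deriv (fun u => -X u) = fun u => -deriv X u := funext fun u => deriv.neg
    rw [this, deriv.fun_neg]
  rw [hneg, key]
  ring
end

section
/- The function x(t) = (℘(√(2E)(t−t₀); g₂, g₃) − ν/(6E))^{−1/2}, with g₂ = ν²/(3E²) and g₃ = 2/E − ν³/(27E³), satisfies the equation x'' = −3x⁵ + νx wherever x is defined, smooth, and nonvanishing. -/
/-- x(t) = (℘(√(2E)(t−t₀);g₂,g₃) − ν/(6E))^{−1/2}, with g₂ = ν²/(3E²),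
g₃ = 2/E − ν³/(27E³), satisfies x'' = −3x⁵ + νx wherever it is defined, smooth
and nonvanishing. -/
theorem stmt14 (E ν t₀ c : ℝ) (hE : E ≠ 0) (hc : c ^ 2 = 2 * E)
    (P x : ℝ → ℝ) (s : Set ℝ) (hs : IsOpen s)
    (hPsm : ContDiff ℝ (⊤ : ℕ∞) P)
    (hP1 : ∀ z, (deriv P z) ^ 2 =
      4 * P z ^ 3 - (ν ^ 2 / (3 * E ^ 2)) * P z - (2 / E - ν ^ 3 / (27 * E ^ 3)))
    (hP2 : ∀ z, deriv (deriv P) z = 6 * P z ^ 2 - (ν ^ 2 / (3 * E ^ 2)) / 2)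
    (hx : ContDiffOn ℝ (⊤ : ℕ∞) x s)
    (hxnz : ∀ t ∈ s, x t ≠ 0)
    (hxdef : ∀ t ∈ s, x t ^ 2 * (P (c * (t - t₀)) - ν / (6 * E)) = 1) :
    ∀ t ∈ s, deriv (deriv x) t = -3 * x t ^ 5 + ν * x t := by
  have hPd : Differentiable ℝ P := hPsm.differentiable (by simp)
  have hP'sm : ContDiff ℝ ((⊤:ℕ∞) : WithTop ℕ∞) (deriv P) := (contDiff_infty_iff_deriv.mp (hPsm.of_le (by simp))).2
  have hP'd : Differentiable ℝ (deriv P) := hP'sm.differentiable (by simp)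
  have hxd : DifferentiableOn ℝ x s := hx.differentiableOn (by simp)
  have hx'cd : ContDiffOn ℝ ((⊤:ℕ∞) : WithTop ℕ∞) (deriv x) s := ((contDiffOn_infty_iff_deriv_of_isOpen hs).mp (hx.of_le (by simp))).2
  have hx'd : DifferentiableOn ℝ (deriv x) s := hx'cd.differentiableOn (by simp)
  have haff : ∀ τ : ℝ, HasDerivAt (fun τ => c * (τ - t₀)) c τ := by
    intro τ
    simpa using ((hasDerivAt_id τ).sub_const t₀).const_mul c
  have hu : ∀ τ : ℝ, HasDerivAt (fun τ => P (c * (τ - t₀)) - ν / (6 * E))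
      (c * deriv P (c * (τ - t₀))) τ := by
    intro τ
    have h2 := ((hPd (c * (τ - t₀))).hasDerivAt.comp τ (haff τ)).sub_const (ν / (6 * E))
    simpa [mul_comm] using h2
  have key2 : ∀ τ ∈ s,
      2 * x τ * deriv x τ * (P (c * (τ - t₀)) - ν / (6 * E))
        + x τ ^ 2 * (c * deriv P (c * (τ - t₀))) = 0 := by
    intro τ hτ
    have hxτ : HasDerivAt x (deriv x τ) τ :=
      (hxd.differentiableAt (hs.mem_nhds hτ)).hasDerivAt
    have hF : HasDerivAt (fun τ => x τ ^ 2 * (P (c * (τ - t₀)) - ν / (6 * E)))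
        (2 * x τ * deriv x τ * (P (c * (τ - t₀)) - ν / (6 * E))
          + x τ ^ 2 * (c * deriv P (c * (τ - t₀)))) τ := by
      have := (hxτ.fun_pow 2).fun_mul (hu τ)
      exact this.congr_deriv (by ring)
    have hEq : (fun τ => x τ ^ 2 * (P (c * (τ - t₀)) - ν / (6 * E))) =ᶠ[nhds τ]
        (fun _ => (1 : ℝ)) :=
      Filter.eventuallyEq_of_mem (hs.mem_nhds hτ) (fun τ' hτ' => hxdef τ' hτ')
    have h0 : HasDerivAt (fun τ => x τ ^ 2 * (P (c * (τ - t₀)) - ν / (6 * E))) 0 τ :=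
      (hasDerivAt_const τ (1 : ℝ)).congr_of_eventuallyEq hEq
    exact hF.unique h0
  intro t ht
  have hxt : HasDerivAt x (deriv x t) t :=
    (hxd.differentiableAt (hs.mem_nhds ht)).hasDerivAt
  have hx't : HasDerivAt (deriv x) (deriv (deriv x) t) t :=
    (hx'd.differentiableAt (hs.mem_nhds ht)).hasDerivAt
  have hu't : HasDerivAt (fun τ => deriv P (c * (τ - t₀)))
      (c * deriv (deriv P) (c * (t - t₀))) t := by
    have h2 := (hP'd (c * (t - t₀))).hasDerivAt.comp t (haff t)
    simpa [mul_comm, Function.comp_def] using h2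
  -- derivative of the relation key2
  have hG : HasDerivAt (fun τ =>
      2 * x τ * deriv x τ * (P (c * (τ - t₀)) - ν / (6 * E))
        + x τ ^ 2 * (c * deriv P (c * (τ - t₀))))
      (2 * deriv x t * deriv x t * (P (c * (t - t₀)) - ν / (6 * E))
        + 2 * x t * deriv (deriv x) t * (P (c * (t - t₀)) - ν / (6 * E))
        + 2 * x t * deriv x t * (c * deriv P (c * (t - t₀)))
        + (2 * x t * deriv x t * (c * deriv P (c * (t - t₀)))
            + x t ^ 2 * (c * (c * deriv (deriv P) (c * (t - t₀)))))) t := by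
    have h1 := (((hxt.const_mul 2).fun_mul hx't).fun_mul (hu t))
    have h2 := (hxt.fun_pow 2).fun_mul (hu't.const_mul c)
    have := h1.fun_add h2
    exact this.congr_deriv (by ring)
  have hEq3 : (fun τ =>
      2 * x τ * deriv x τ * (P (c * (τ - t₀)) - ν / (6 * E))
        + x τ ^ 2 * (c * deriv P (c * (τ - t₀)))) =ᶠ[nhds t] (fun _ => (0 : ℝ)) :=
    Filter.eventuallyEq_of_mem (hs.mem_nhds ht) (fun τ' hτ' => key2 τ' hτ')
  have h0 : HasDerivAt (fun τ =>
      2 * x τ * deriv x τ * (P (c * (τ - t₀)) - ν / (6 * E))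
        + x τ ^ 2 * (c * deriv P (c * (τ - t₀)))) 0 t :=
    (hasDerivAt_const t (0 : ℝ)).congr_of_eventuallyEq hEq3
  have E3 := hG.unique h0
  have E2 := key2 t ht
  have E1 := hxdef t ht
  have hXne : x t ≠ 0 := hxnz t ht
  have hP1z := hP1 (c * (t - t₀))
  have hP2z := hP2 (c * (t - t₀))
  set X := x t
  set X' := deriv x t
  set X'' := deriv (deriv x) t
  set Pz := P (c * (t - t₀))
  set P' := deriv P (c * (t - t₀))
  set P'' := deriv (deriv P) (c * (t - t₀))
  -- from E1: Pz - ν/(6E) = 1/X²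
  have hu1 : Pz - ν / (6 * E) = 1 / X ^ 2 := by
    field_simp at E1 ⊢
    linarith
  have hx'val : X' = -(X ^ 3 * c * P') / 2 := by
    rw [hu1] at E2
    field_simp at E2
    have h2 : X * (X' * 2) = X * (-(X ^ 3 * c * P')) := by linear_combination X * E2
    have := mul_left_cancel₀ hXne h2
    linarith
  rw [hu1, hx'val, hP2z] at E3
  field_simp at E3 hP1z E1 ⊢
  have hM : (192:ℝ) * X ^ 3 * E ^ 6 ≠ 0 :=
    mul_ne_zero (mul_ne_zero (by norm_num) (pow_ne_zero _ hXne)) (pow_ne_zero _ hE)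
  have key : 192 * X ^ 3 * E ^ 6 * X'' = 192 * X ^ 3 * E ^ 6 * (-(3 * X ^ 5) + ν * X) := by
    linear_combination (16 * X ^ 3 * E ^ 4) * E3
      + (144*X^8*E^6*P'^2 - 576*X^6*E^6*Pz^2 + 16*X^6*E^4*ν^2) * hc
      + ((32:ℝ)/9*X^8*E^4) * hP1z
      + (-32*X^2*E^5*((6*E+ν*X^2) + 6*E*Pz*X^2)
          + (16:ℝ)/3*X^2*E^4*((6*E+ν*X^2)^2 + (6*E+ν*X^2)*(6*E*Pz*X^2) + (6*E*Pz*X^2)^2)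
          - 16*X^6*E^4*ν^2) * E1
  exact mul_left_cancel₀ hM (key.trans (by ring))
end

section
/- Suppose N points x₁,…,x_N and K points y₁,…,y_K (all distinct, x's distinct from y's) satisfy the Stieltjes relations Σ_j 1/(x_k − y_j) − Σ_{i≠k} 1/(x_k − x_i) + Q'(x_k) = 0 for all k, where Q is a polynomial. Then the logarithmic derivative f = Σ_j 1/(x−y_j) − Σ_i 1/(x−x_i) + Q' has the property that f' + f² has zero residue and zero coefficient of (x−x_k)¹ at each pole x_k; in particular the coefficient of (x−x_k)⁻¹ in f' + f² vanishes. -/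
/-!
Near a pole `c = x k`, `f z = S z - (z - c)⁻¹` with `S` analytic at `c`, and the Stieltjes
relation says exactly `S c = 0`. Then `f' + f² = 2 / (z - c)² + S' + S² - 2 S / (z - c)`, and
writing `S = (z - c) h` with `h = dslope S c` the regular part is `g = S' + S² - 2 h`. Since
`S'' c = 2 h' c` and `S c = 0`, `g' c = S'' c + 2 S c S' c - 2 h' c = 0`.
-/

open Finset
open scoped Topology

section

variable {𝕜 : Type*} [NontriviallyNormedField 𝕜] {S : 𝕜 → 𝕜} {c : 𝕜}

theorem analyticAt_sum_one_div_sub {ι : Type*} (s : Finset ι) (a : ι → 𝕜)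
    (ha : ∀ i ∈ s, c ≠ a i) : AnalyticAt 𝕜 (fun z => ∑ i ∈ s, 1 / (z - a i)) c :=
  Finset.analyticAt_fun_sum _ fun i hi => by
    fun_prop (disch := exact sub_ne_zero.mpr (ha i hi))

theorem AnalyticAt.analyticAt_dslope (hS : AnalyticAt 𝕜 S c) :
    AnalyticAt 𝕜 (dslope S c) c := by
  obtain ⟨p, hp⟩ := hS
  exact ⟨p.fslope, hp.has_fpower_series_dslope_fslope⟩

theorem eq_add_sub_mul_dslope (S : 𝕜 → 𝕜) (c : 𝕜) :
    S = fun w => S c + (w - c) * dslope S c w := by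
  ext w
  rw [← smul_eq_mul, sub_smul_dslope, add_sub_cancel]

variable [CompleteSpace 𝕜]

theorem AnalyticAt.deriv_deriv_eq_two_mul_deriv_dslope (hS : AnalyticAt 𝕜 S c) :
    deriv (deriv S) c = 2 * deriv (dslope S c) c := by
  set h := dslope S c
  have hh : AnalyticAt 𝕜 h c := hS.analyticAt_dslope
  have hderiv : deriv S =ᶠ[𝓝 c] fun w => h w + (w - c) * deriv h w := by
    filter_upwards [hh.eventually_analyticAt] with w hw
    have : HasDerivAt (fun w => S c + (w - c) * h w) (1 * h w + (w - c) * deriv h w) w :=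
      (((hasDerivAt_id' w).sub_const c).mul hw.differentiableAt.hasDerivAt).const_add (S c)
    rw [eq_add_sub_mul_dslope S c, this.deriv, one_mul]
  have : HasDerivAt (fun w => h w + (w - c) * deriv h w)
      (deriv h c + (1 * deriv h c + (c - c) * deriv (deriv h) c)) c :=
    hh.differentiableAt.hasDerivAt.add
      (((hasDerivAt_id' c).sub_const c).mul hh.deriv.differentiableAt.hasDerivAt)
  rw [hderiv.deriv_eq, this.deriv]
  ring

theorem AnalyticAt.exists_deriv_add_sq_eq_of_simple_pole (hS : AnalyticAt 𝕜 S c)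
    (hc : S c = 0) :
    ∃ g : 𝕜 → 𝕜, AnalyticAt 𝕜 g c ∧ deriv g c = 0 ∧
      ∀ᶠ z in 𝓝[≠] c, deriv (fun w => S w - (w - c)⁻¹) z + (S z - (z - c)⁻¹) ^ 2
        = 2 / (z - c) ^ 2 + g z := by
  set h := dslope S c
  have hh : AnalyticAt 𝕜 h c := hS.analyticAt_dslope
  refine ⟨fun z => deriv S z + S z ^ 2 - 2 * h z, by fun_prop, ?_, ?_⟩
  · have hS' : DifferentiableAt 𝕜 (deriv S) c := hS.deriv.differentiableAt
    have hS₀ : DifferentiableAt 𝕜 S c := hS.differentiableAt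
    have hh₀ : DifferentiableAt 𝕜 h c := hh.differentiableAt
    rw [deriv_fun_sub (by fun_prop) (by fun_prop), deriv_fun_add hS' (by fun_prop),
      deriv_fun_pow hS₀, deriv_const_mul _ hh₀, hS.deriv_deriv_eq_two_mul_deriv_dslope, hc]
    ring
  · filter_upwards [eventually_nhdsWithin_of_eventually_nhds hS.eventually_analyticAt,
      self_mem_nhdsWithin] with z hz hzne
    have hzc : z - c ≠ 0 := sub_ne_zero.mpr hzne
    have hSz : S z = (z - c) * h z := by
      simpa [hc] using congrFun (eq_add_sub_mul_dslope S c) z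
    have : HasDerivAt (fun w => S w - (w - c)⁻¹) (deriv S z - -1 / (z - c) ^ 2) z :=
      hz.differentiableAt.hasDerivAt.sub (((hasDerivAt_id' z).sub_const c).inv hzc)
    rw [this.deriv, hSz]
    field_simp
    ring

end

theorem stmt15_general (N K : ℕ) (x : Fin N → ℂ) (y : Fin K → ℂ)
    (hx : Function.Injective x)
    (hxy : ∀ i j, x i ≠ y j)
    (Q : Polynomial ℂ) (f : ℂ → ℂ)
    (hf : ∀ z : ℂ, f z = ∑ j, 1 / (z - y j) - ∑ i, 1 / (z - x i)
      + (Polynomial.derivative Q).eval z)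
    (hSt : ∀ k : Fin N, ∑ j, 1 / (x k - y j)
      - ∑ i ∈ Finset.univ.erase k, 1 / (x k - x i)
      + (Polynomial.derivative Q).eval (x k) = 0) :
    ∀ k : Fin N, ∃ g : ℂ → ℂ, AnalyticAt ℂ g (x k) ∧ deriv g (x k) = 0 ∧
      ∀ᶠ z in 𝓝[≠] (x k), deriv f z + f z ^ 2 = 2 / (z - x k) ^ 2 + g z := by
  intro k
  set S : ℂ → ℂ := fun z => ∑ j, 1 / (z - y j) - ∑ i ∈ univ.erase k, 1 / (z - x i)
    + (Polynomial.derivative Q).eval z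
  have hS : AnalyticAt ℂ S (x k) :=
    ((analyticAt_sum_one_div_sub _ y fun j _ => hxy k j).sub
      (analyticAt_sum_one_div_sub _ x fun i hi => hx.ne (ne_of_mem_erase hi).symm)).add
      (AnalyticOnNhd.eval_polynomial _ _ (Set.mem_univ _))
  have hfS : f = fun z => S z - (z - x k)⁻¹ := by
    ext z
    rw [hf, ← add_sum_erase _ _ (mem_univ k), one_div]
    ring
  obtain ⟨g, hg, hg', hfg⟩ := hS.exists_deriv_add_sq_eq_of_simple_pole (hSt k)
  exact ⟨g, hg, hg', by rw [hfS]; exact hfg⟩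

/-- If poles xₖ and zeroes y_j satisfy the Stieltjes relations, then
f' + f² (where f = Σ 1/(x−y_j) − Σ 1/(x−x_i) + Q') has, at each pole xₖ,
Laurent expansion 2/(x−xₖ)² + (analytic part) with zero residue, and the
coefficient of (x−xₖ)¹ also vanishes. -/
theorem stmt15 (N K : ℕ) (x : Fin N → ℂ) (y : Fin K → ℂ)
    (hx : Function.Injective x) (hy : Function.Injective y)
    (hxy : ∀ i j, x i ≠ y j)
    (Q : Polynomial ℂ) (f : ℂ → ℂ)
    (hf : ∀ z : ℂ, f z = ∑ j, 1 / (z - y j) - ∑ i, 1 / (z - x i)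
      + (Polynomial.derivative Q).eval z)
    (hSt : ∀ k : Fin N, ∑ j, 1 / (x k - y j)
      - ∑ i ∈ Finset.univ.erase k, 1 / (x k - x i)
      + (Polynomial.derivative Q).eval (x k) = 0) :
    ∀ k : Fin N, ∃ g : ℂ → ℂ, AnalyticAt ℂ g (x k) ∧ deriv g (x k) = 0 ∧
      ∀ᶠ z in 𝓝[≠] (x k), deriv f z + f z ^ 2 = 2 / (z - x k) ^ 2 + g z :=
  stmt15_general N K x y hx hxy Q f hf hSt
end
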